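/- Define z_h = (5/11)·(1 + (2−h)/(2(6h−1−11/h)))/(1 + h/(2(6h−1−11/h))) for integers h ≥ 2. Then the sequence (z_h) for h ≥ 4 is monotone decreasing, lim_{h→∞} z_h = 5/13, and z_h > ξ for all h ≥ 2, where ξ = 2/(2 + 6/1.364²). -/

import Mathlib

/-! `z_h` simplifies to the rational function `5 (h² - 2) / (13 h² - 2 h - 22)`, which equals
`5/13 + 10 (h - 2) / (13 (13 h² - 2 h - 22))`. Hence `z_h ≥ 5/13 > ξ` for `h ≥ 2`, and
`z_h → 5/13`. After cross-multiplying, `z_y < z_x` for `x < y` reduces to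
`(x - 2)(y - 2) > 2`, which holds once `x, y ≥ 4`. -/

open Filter Set Topology

noncomputable def zClosedForm (x : ℝ) : ℝ := 5 * (x ^ 2 - 2) / (13 * x ^ 2 - 2 * x - 22)

lemma zClosedForm_denom_pos {x : ℝ} (hx : 2 ≤ x) : 0 < 13 * x ^ 2 - 2 * x - 22 := by
  nlinarith

lemma zClosedForm_eq {x : ℝ} (hx : 2 ≤ x) :
    (5/11) * (1 + (2 - x) / (2 * (6 * x - 1 - 11 / x))) / (1 + x / (2 * (6 * x - 1 - 11 / x)))
      = zClosedForm x := by
  have hx0 : 0 < x := by positivity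
  have hD : 0 < 6 * x - 1 - 11 / x := by
    have : 11 / x ≤ 11 / 2 := div_le_div_of_nonneg_left (by norm_num) (by norm_num) hx
    linarith
  rw [zClosedForm, div_eq_div_iff (by positivity) (zClosedForm_denom_pos hx).ne']
  -- `x * (6 x - 1 - 11 / x)`, written in the normal form `field_simp` looks for
  have hD' : x * (x * 6 - 1) - 11 ≠ 0 := by nlinarith
  field_simp
  ring

lemma five_div_thirteen_le_zClosedForm {x : ℝ} (hx : 2 ≤ x) : 5 / 13 ≤ zClosedForm x := by
  rw [zClosedForm, le_div_iff₀ (zClosedForm_denom_pos hx)]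
  linarith

lemma strictAntiOn_zClosedForm : StrictAntiOn zClosedForm (Ici 4) := by
  intro x (hx : 4 ≤ x) y (hy : 4 ≤ y) hxy
  rw [zClosedForm, zClosedForm, div_lt_div_iff₀ (zClosedForm_denom_pos (by linarith))
    (zClosedForm_denom_pos (by linarith))]
  have hprod : 2 < (x - 2) * (y - 2) := by nlinarith
  nlinarith [mul_lt_mul_of_pos_left hprod (sub_pos.2 hxy)]

lemma tendsto_zClosedForm_atTop : Tendsto zClosedForm atTop (𝓝 (5 / 13)) := by
  set g : ℝ → ℝ := fun t => (5 - 10 * t ^ 2) / (13 - 2 * t - 22 * t ^ 2)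
  have hg : ContinuousAt g 0 := by
    refine ContinuousAt.div (by fun_prop) (by fun_prop) ?_
    norm_num
  have hg0 : g 0 = 5 / 13 := by norm_num [g]
  have hzg : g ∘ (·⁻¹) =ᶠ[atTop] zClosedForm := by
    filter_upwards [eventually_ge_atTop 2] with x hx
    have hx0 : x ≠ 0 := by positivity
    have hden := (zClosedForm_denom_pos hx).ne'
    simp only [Function.comp_apply, g, zClosedForm]
    field_simp
    ring
  exact (hg0 ▸ hg.tendsto.comp tendsto_inv_atTop_zero).congr' hzg

theorem stmt_16
    (z : ℕ → ℝ)
    (hz : ∀ h : ℕ, z h = (5/11) * (1 + (2 - (h : ℝ)) / (2 * (6 * (h : ℝ) - 1 - 11 / (h : ℝ))))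
        / (1 + (h : ℝ) / (2 * (6 * (h : ℝ) - 1 - 11 / (h : ℝ)))))
    (ξ : ℝ) (hξ : ξ = 2 / (2 + 6 / (1.364 : ℝ)^2)) :
    (∀ h : ℕ, 4 ≤ h → z (h + 1) < z h) ∧
    Filter.Tendsto z Filter.atTop (nhds (5/13)) ∧
    (∀ h : ℕ, 2 ≤ h → ξ < z h) := by
  have hz_closed : ∀ h : ℕ, 2 ≤ h → z h = zClosedForm h := fun h hh => by
    rw [hz, zClosedForm_eq (by exact_mod_cast hh)]
  refine ⟨fun h hh => ?_, ?_, fun h hh => ?_⟩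
  · have hh' : (4 : ℝ) ≤ h := by exact_mod_cast hh
    rw [hz_closed h (by omega), hz_closed (h + 1) (by omega), Nat.cast_succ]
    exact strictAntiOn_zClosedForm hh' (by rw [mem_Ici]; linarith) (lt_add_one _)
  · refine (tendsto_zClosedForm_atTop.comp tendsto_natCast_atTop_atTop).congr' ?_
    filter_upwards [eventually_ge_atTop 2] with h hh
    exact (hz_closed h hh).symm
  · calc ξ < 5 / 13 := by rw [hξ]; norm_num
      _ ≤ z h := hz_closed h hh ▸ five_div_thirteen_le_zClosedForm (by exact_mod_cast hh)
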